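/- arXiv:1904.03563 — 3 statements merged into one kernel-verified Lean document; each statement's English description precedes it below -/
import Mathlib

section
/- Let x ∈ ℝⁿ with x > 0 componentwise, let β ∈ [0, 1), and let d ∈ ℝⁿ satisfy ‖X⁻¹X̄d‖∞ ≤ β. Then −Σᵢ log(xᵢ + x̄ᵢdᵢ) + Σᵢ log(xᵢ) ≤ −eᵀX⁻¹X̄d + (1/2)·dᵀX̄X⁻²X̄d + ((2 − β)/(6(1 − β)²))·‖d‖³, where ‖·‖ denotes the Euclidean norm. -/
/-! With `tᵢ = (x̄ᵢ/xᵢ) dᵢ` the left-hand side is `−Σᵢ log(1 + tᵢ)` and `−β ≤ tᵢ`, so it suffices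
to bound each term. The function `log(1 + s) − s + s²/2` has derivative `s²/(1 + s)`, hence is
nonnegative for `s ≥ 0`; on `[−β, 0]` its derivative is at most `s²/(1 − β)`, which gives the
lower bound `s³/(3(1 − β))` there. Summing, the cubic terms are controlled by
`Σᵢ |tᵢ|³ ≤ Σᵢ |dᵢ|³ ≤ ‖d‖ · Σᵢ dᵢ² = ‖d‖³`, and `1/(3(1 − β)) ≤ (2 − β)/(6(1 − β)²)`. -/

open Matrix

noncomputable def euclNorm {n : ℕ} (v : Fin n → ℝ) : ℝ := Real.sqrt (∑ i, (v i)^2)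

open Real Set Finset

lemma hasDerivAt_log_one_add_sub_add_sq_div_two {s : ℝ} (hs : 1 + s ≠ 0) :
    HasDerivAt (fun s => log (1 + s) - s + s ^ 2 / 2) (s ^ 2 / (1 + s)) s := by
  have hlog : HasDerivAt (fun s => log (1 + s)) (1 / (1 + s)) s := by
    simpa using ((hasDerivAt_id s).const_add 1).log hs
  refine ((hlog.sub (hasDerivAt_id' s)).add ((hasDerivAt_pow 2 s).div_const 2)).congr_deriv ?_
  field_simp
  ring

lemma sub_sq_div_two_le_log_one_add {t : ℝ} (ht : 0 ≤ t) : t - t ^ 2 / 2 ≤ log (1 + t) := by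
  have hmono : MonotoneOn (fun s => log (1 + s) - s + s ^ 2 / 2) (Ici 0) := by
    refine monotoneOn_of_hasDerivWithinAt_nonneg (f' := fun s => s ^ 2 / (1 + s))
      (convex_Ici 0) ?_ ?_ ?_
    · exact fun s hs => ((hasDerivAt_log_one_add_sub_add_sq_div_two
        (by linarith [mem_Ici.mp hs])).continuousAt).continuousWithinAt
    · intro s hs
      rw [interior_Ici] at hs
      exact (hasDerivAt_log_one_add_sub_add_sq_div_two
        (by linarith [mem_Ioi.mp hs])).hasDerivWithinAt
    · intro s hs
      rw [interior_Ici] at hs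
      have : 0 < 1 + s := by linarith [mem_Ioi.mp hs]
      positivity
  have := hmono self_mem_Ici (mem_Ici.mpr ht) ht
  simp only [add_zero, log_one, sub_zero, ne_eq, OfNat.ofNat_ne_zero, not_false_eq_true,
    zero_pow, zero_div] at this
  linarith

lemma sub_sq_div_two_add_pow_three_le_log_one_add {β t : ℝ} (hβ : β < 1) (ht : -β ≤ t)
    (ht₀ : t ≤ 0) : t - t ^ 2 / 2 + t ^ 3 / (3 * (1 - β)) ≤ log (1 + t) := by
  have hβ' : 0 < 1 - β := by linarith
  have hderiv : ∀ s ∈ Icc (-β) 0, HasDerivAt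
      (fun s => log (1 + s) - s + s ^ 2 / 2 - s ^ 3 / (3 * (1 - β)))
      (s ^ 2 / (1 + s) - s ^ 2 / (1 - β)) s := fun s hs => by
    refine ((hasDerivAt_log_one_add_sub_add_sq_div_two (by linarith [hs.1])).sub
      ((hasDerivAt_pow 3 s).div_const (3 * (1 - β)))).congr_deriv ?_
    field_simp
    ring
  have hanti : AntitoneOn (fun s => log (1 + s) - s + s ^ 2 / 2 - s ^ 3 / (3 * (1 - β)))
      (Icc (-β) 0) := by
    refine antitoneOn_of_hasDerivWithinAt_nonpos (convex_Icc _ _)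
      (fun s hs => (hderiv s hs).continuousAt.continuousWithinAt)
      (fun s hs => (hderiv s (interior_subset hs)).hasDerivWithinAt) ?_
    intro s hs
    rw [interior_Icc] at hs
    have : s ^ 2 / (1 + s) ≤ s ^ 2 / (1 - β) :=
      div_le_div_of_nonneg_left (sq_nonneg s) hβ' (by linarith [hs.1])
    linarith
  have := hanti ⟨ht, ht₀⟩ ⟨by linarith, le_rfl⟩ ht₀
  simp only [add_zero, log_one, sub_zero, ne_eq, OfNat.ofNat_ne_zero, not_false_eq_true,
    zero_pow, zero_div] at this
  linarith

lemma neg_log_one_add_le {β t : ℝ} (hβ : β < 1) (ht : -β ≤ t) :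
    -log (1 + t) ≤ -t + t ^ 2 / 2 + |t| ^ 3 / (3 * (1 - β)) := by
  rcases le_total 0 t with h | h
  · have : 0 ≤ |t| ^ 3 / (3 * (1 - β)) := div_nonneg (by positivity) (by linarith)
    linarith [sub_sq_div_two_le_log_one_add h]
  · have : |t| ^ 3 = -t ^ 3 := by rw [abs_of_nonpos h]; ring
    rw [this, neg_div]
    linarith [sub_sq_div_two_add_pow_three_le_log_one_add hβ ht h]

lemma abs_le_euclNorm {n : ℕ} (v : Fin n → ℝ) (i : Fin n) : |v i| ≤ euclNorm v := by
  rw [euclNorm, ← sqrt_sq_eq_abs]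
  exact sqrt_le_sqrt (single_le_sum (fun j _ => sq_nonneg (v j)) (mem_univ i))

lemma sum_abs_pow_three_le_euclNorm_pow_three {n : ℕ} (v : Fin n → ℝ) :
    ∑ i, |v i| ^ 3 ≤ euclNorm v ^ 3 :=
  calc ∑ i, |v i| ^ 3 = ∑ i, |v i| * v i ^ 2 := by
        refine sum_congr rfl fun i _ => ?_
        rw [← sq_abs (v i)]
        ring
    _ ≤ ∑ i, euclNorm v * v i ^ 2 :=
        sum_le_sum fun i _ => mul_le_mul_of_nonneg_right (abs_le_euclNorm v i) (sq_nonneg _)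
    _ = euclNorm v ^ 3 := by
        rw [← mul_sum, euclNorm, pow_succ, sq_sqrt (by positivity), mul_comm]

lemma sum_abs_mul_pow_three_le_euclNorm_pow_three {n : ℕ} (r v : Fin n → ℝ)
    (hr : ∀ i, |r i| ≤ 1) : ∑ i, |r i * v i| ^ 3 ≤ euclNorm v ^ 3 :=
  calc ∑ i, |r i * v i| ^ 3 ≤ ∑ i, |v i| ^ 3 := sum_le_sum fun i _ => by
        rw [abs_mul]
        gcongr
        exact mul_le_of_le_one_left (abs_nonneg _) (hr i)
    _ ≤ euclNorm v ^ 3 := sum_abs_pow_three_le_euclNorm_pow_three v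

lemma log_add_eq_log_add_log_one_add_div {a b : ℝ} (ha : 0 < a) (hab : 0 < 1 + b / a) :
    log (a + b) = log a + log (1 + b / a) := by
  rw [← log_mul ha.ne' hab.ne', mul_one_add, mul_div_cancel₀ b ha.ne']

lemma one_div_three_mul_one_sub_le {β : ℝ} (hβ₀ : 0 ≤ β) (hβ₁ : β < 1) :
    1 / (3 * (1 - β)) ≤ (2 - β) / (6 * (1 - β) ^ 2) := by
  rw [div_le_div_iff₀ (by linarith) (by nlinarith)]
  nlinarith

/-- for `x > 0`, `β ∈ [0,1)` and `d` with `‖X⁻¹X̄d‖∞ ≤ β`,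
`−Σᵢ log(xᵢ + x̄ᵢdᵢ) + Σᵢ log xᵢ ≤ −eᵀX⁻¹X̄d + ½ dᵀX̄X⁻²X̄d + ((2−β)/(6(1−β)²))‖d‖³`,
where `x̄ᵢ = min(xᵢ,1)`, `eᵀX⁻¹X̄d = Σᵢ (x̄ᵢ/xᵢ)dᵢ`, `dᵀX̄X⁻²X̄d = Σᵢ (x̄ᵢ/xᵢ)² dᵢ²`,
`‖·‖` on `Fin n → ℝ` is the max-norm, and `euclNorm` is the Euclidean norm. -/
theorem stmt5 {n : ℕ} (x d : Fin n → ℝ) (hx : ∀ i, 0 < x i)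
    (β : ℝ) (hβ : β ∈ Set.Ico (0:ℝ) 1)
    (hd : ‖(fun i => (min (x i) 1 / x i) * d i : Fin n → ℝ)‖ ≤ β) :
    -∑ i, Real.log (x i + min (x i) 1 * d i) + ∑ i, Real.log (x i) ≤
      -∑ i, (min (x i) 1 / x i) * d i
      + (1/2) * ∑ i, (min (x i) 1 / x i)^2 * (d i)^2
      + ((2 - β) / (6 * (1 - β)^2)) * euclNorm d ^ 3 := by
  obtain ⟨hβ₀, hβ₁⟩ := hβ
  set r : Fin n → ℝ := fun i => min (x i) 1 / x i
  have hr : ∀ i, |r i| ≤ 1 := fun i => by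
    rw [abs_of_nonneg (div_nonneg (le_min (hx i).le zero_le_one) (hx i).le)]
    exact (div_le_one (hx i)).mpr (min_le_left _ _)
  have ht : ∀ i, -β ≤ r i * d i := fun i => (abs_le.mp ((norm_le_pi_norm _ i).trans hd)).1
  have hlog : ∀ i, log (x i + min (x i) 1 * d i) = log (x i) + log (1 + r i * d i) := fun i => by
    have h := log_add_eq_log_add_log_one_add_div (hx i) (b := min (x i) 1 * d i)
    rw [mul_div_right_comm] at h
    exact h (by linarith [ht i])
  calc -∑ i, log (x i + min (x i) 1 * d i) + ∑ i, log (x i)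
      = ∑ i, -log (1 + r i * d i) := by
        simp only [hlog, sum_add_distrib, sum_neg_distrib]
        ring
    _ ≤ ∑ i, (-(r i * d i) + (r i * d i) ^ 2 / 2 + |r i * d i| ^ 3 / (3 * (1 - β))) :=
        sum_le_sum fun i _ => neg_log_one_add_le hβ₁ (ht i)
    _ = -∑ i, r i * d i + (1 / 2) * ∑ i, r i ^ 2 * d i ^ 2
          + 1 / (3 * (1 - β)) * ∑ i, |r i * d i| ^ 3 := by
        simp only [sum_add_distrib, sum_neg_distrib, mul_sum, mul_pow, div_eq_inv_mul, mul_one]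
    _ ≤ _ := add_le_add le_rfl (mul_le_mul (one_div_three_mul_one_sub_le hβ₀ hβ₁)
        (sum_abs_mul_pow_three_le_euclNorm_pow_three r d hr) (by positivity)
        (div_nonneg (by linarith) (by positivity)))
end

section
/- Let H be a symmetric n×n real matrix with operator norm ‖H‖ ≤ M for some M ≥ 0, let ε > 0 and ζ ∈ (0, 1), and set κ = (M + 2ε)/ε and ẑ = ζ/(3κ). Let g, d̂ ∈ ℝⁿ and define r̂ = (H + 2ε·I)d̂ + g. If ‖r̂‖ ≤ ẑ‖g‖, then ‖r̂‖ ≤ (ζε/2)‖d̂‖. -/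
open Matrix

/-- The operator norm (induced by the Euclidean norm) of a matrix. -/
noncomputable def opNorm {n : ℕ} (A : Matrix (Fin n) (Fin n) ℝ) : ℝ :=
  ‖Matrix.toEuclideanCLM (𝕜 := ℝ) A‖

/-! If the residual `r = a + g` satisfies `‖r‖ ≤ z‖g‖`, then `‖g‖ ≤ ‖r‖ + ‖a‖` gives
`(1 - z)‖r‖ ≤ z‖a‖`. With `a = (H + 2εI)d̂`, `‖a‖ ≤ (M + 2ε)‖d̂‖ = κε‖d̂‖`, and since `zκ = ζ/3`
and `1 - z ≥ 2/3` (as `κ ≥ 2`), this yields `‖r‖ ≤ (ζε/2)‖d̂‖`. -/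

lemma one_sub_mul_norm_add_le {E : Type*} [SeminormedAddCommGroup E] {a g : E} {z : ℝ}
    (hz : 0 ≤ z) (h : ‖a + g‖ ≤ z * ‖g‖) : (1 - z) * ‖a + g‖ ≤ z * ‖a‖ := by
  have hg : ‖g‖ ≤ ‖a + g‖ + ‖a‖ := by
    simpa using norm_sub_le (a + g) a
  nlinarith [mul_le_mul_of_nonneg_left hg hz]

lemma euclNorm_eq_norm_toLp {n : ℕ} (v : Fin n → ℝ) : euclNorm v = ‖WithLp.toLp 2 v‖ := by
  simp only [euclNorm, EuclideanSpace.norm_eq, Real.norm_eq_abs, sq_abs]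

lemma one_sub_mul_euclNorm_mulVec_add_le {n : ℕ} (A : Matrix (Fin n) (Fin n) ℝ)
    {d g : Fin n → ℝ} {z : ℝ} (hz : 0 ≤ z)
    (h : euclNorm (A *ᵥ d + g) ≤ z * euclNorm g) :
    (1 - z) * euclNorm (A *ᵥ d + g) ≤ z * opNorm A * euclNorm d := by
  simp only [euclNorm_eq_norm_toLp, WithLp.toLp_add, ← toEuclideanCLM_toLp] at h ⊢
  calc (1 - z) * ‖toEuclideanCLM (𝕜 := ℝ) A (WithLp.toLp 2 d) + WithLp.toLp 2 g‖
      ≤ z * ‖toEuclideanCLM (𝕜 := ℝ) A (WithLp.toLp 2 d)‖ := one_sub_mul_norm_add_le hz h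
    _ ≤ z * opNorm A * ‖WithLp.toLp 2 d‖ := by
      rw [mul_assoc]
      exact mul_le_mul_of_nonneg_left ((toEuclideanCLM (𝕜 := ℝ) A).le_opNorm _) hz

lemma opNorm_add_smul_one_le {n : ℕ} (A : Matrix (Fin n) (Fin n) ℝ) (c : ℝ) :
    opNorm (A + c • (1 : Matrix (Fin n) (Fin n) ℝ)) ≤ opNorm A + |c| := by
  simp only [opNorm, map_add, map_smul, map_one]
  refine (norm_add_le _ _).trans (add_le_add_right ?_ _)
  refine (ContinuousLinearMap.opNorm_smul_le _ _).trans ?_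
  rw [Real.norm_eq_abs]
  exact mul_le_of_le_one_right (abs_nonneg c) ContinuousLinearMap.norm_id_le

theorem stmt15_general {n : ℕ} (H : Matrix (Fin n) (Fin n) ℝ)
    (M : ℝ) (hHM : opNorm H ≤ M)
    (ε : ℝ) (hε : 0 < ε) (ζ : ℝ) (hζ : ζ ∈ Set.Ioo (0:ℝ) 1)
    (g dhat rhat : Fin n → ℝ)
    (hrhat : rhat = (H + (2 * ε) • (1 : Matrix (Fin n) (Fin n) ℝ)) *ᵥ dhat + g)
    (h : euclNorm rhat ≤ (ζ / (3 * ((M + 2 * ε) / ε))) * euclNorm g) :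
    euclNorm rhat ≤ (ζ * ε / 2) * euclNorm dhat := by
  obtain ⟨hζ0, hζ1⟩ := hζ
  have hM : 0 ≤ M := (norm_nonneg _).trans hHM
  set κ := (M + 2 * ε) / ε with hκ
  have hκ2 : 2 ≤ κ := by rw [hκ, le_div_iff₀ hε]; linarith
  set z := ζ / (3 * κ) with hz
  have hz0 : 0 ≤ z := by positivity
  have hz3 : z ≤ 1 / 3 := by rw [hz, div_le_iff₀ (by positivity)]; linarith
  have hzκ : z * κ = ζ / 3 := by rw [hz]; field_simp
  have hA : opNorm (H + (2 * ε) • 1) ≤ κ * ε := by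
    rw [hκ, div_mul_cancel₀ _ hε.ne']
    have := opNorm_add_smul_one_le H (2 * ε)
    rw [abs_of_pos (by positivity)] at this
    linarith
  subst hrhat
  have hr : 0 ≤ euclNorm ((H + (2 * ε) • 1) *ᵥ dhat + g) := Real.sqrt_nonneg _
  have hd : 0 ≤ euclNorm dhat := Real.sqrt_nonneg _
  calc _ ≤ 3 / 2 * ((1 - z) * euclNorm ((H + (2 * ε) • 1) *ᵥ dhat + g)) := by nlinarith
    _ ≤ 3 / 2 * (z * opNorm (H + (2 * ε) • 1) * euclNorm dhat) :=
      mul_le_mul_of_nonneg_left (one_sub_mul_euclNorm_mulVec_add_le _ hz0 h) (by norm_num)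
    _ ≤ 3 / 2 * (z * (κ * ε) * euclNorm dhat) := by gcongr
    _ = ζ * ε / 2 * euclNorm dhat := by rw [← mul_assoc z, hzκ]; ring

/-- let `H` be symmetric with operator norm `‖H‖ ≤ M`, `M ≥ 0`, `ε > 0`,
`ζ ∈ (0,1)`, `κ = (M + 2ε)/ε`, `ẑ = ζ/(3κ)`, and `r̂ = (H + 2εI)d̂ + g`. If
`‖r̂‖ ≤ ẑ‖g‖` then `‖r̂‖ ≤ (ζε/2)‖d̂‖` (Euclidean norms). -/
theorem stmt15 {n : ℕ} (H : Matrix (Fin n) (Fin n) ℝ) (hH : H.IsSymm)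
    (M : ℝ) (hM : 0 ≤ M) (hHM : opNorm H ≤ M)
    (ε : ℝ) (hε : 0 < ε) (ζ : ℝ) (hζ : ζ ∈ Set.Ioo (0:ℝ) 1)
    (g dhat rhat : Fin n → ℝ)
    (hrhat : rhat = (H + (2 * ε) • (1 : Matrix (Fin n) (Fin n) ℝ)) *ᵥ dhat + g)
    (h : euclNorm rhat ≤ (ζ / (3 * ((M + 2 * ε) / ε))) * euclNorm g) :
    euclNorm rhat ≤ (ζ * ε / 2) * euclNorm dhat :=
  stmt15_general H M hHM ε hε ζ hζ g dhat rhat hrhat h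
end

section
/- Let H_f be a symmetric n×n real matrix, let x ∈ ℝⁿ with x > 0 componentwise, let ε ∈ (0, 1), set μ = ε²/4, let β ∈ [ε, 1), and let g ∈ ℝⁿ. Let v ∈ ℝⁿ with ‖v‖ = 1 satisfy vᵀX̄H_fX̄v ≤ −ε/2, and define H = X̄(H_f + μX⁻²)X̄. Then vᵀHv ≤ −ε/4. Moreover, if d = −σ·min{ |vᵀHv| , β/‖X⁻¹X̄v‖∞ }·v, where σ = 1 if gᵀv ≥ 0 and σ = −1 otherwise, then gᵀd ≤ 0, ‖d‖ ≥ ε/4, and dᵀHd/‖d‖² ≤ −‖d‖ ≤ −ε/4. -/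
/-!
The barrier term adds `μ vᵀX̄X⁻²X̄v ≤ μ ‖v‖² = ε²/4 ≤ ε/4` to the curvature along `v`, because every
entry `min(xᵢ,1)²/xᵢ²` of `X̄X⁻²X̄` is at most `1`; hence `vᵀHv ≤ -ε/2 + ε/4`. Likewise
`0 < ‖X⁻¹X̄v‖∞ ≤ ‖v‖ = 1`, so the step length `t = min{|vᵀHv|, β/‖X⁻¹X̄v‖∞}` is at least
`min{ε/4, β} = ε/4`, and `‖d‖ = t`. The sign `σ` makes `gᵀd ≤ 0`, and the Rayleigh quotient of
`d` is that of `v`, namely `vᵀHv = -|vᵀHv| ≤ -t`.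
-/

open Matrix

section Euclidean

variable {n : ℕ}

lemma euclNorm_sq (v : Fin n → ℝ) : euclNorm v ^ 2 = v ⬝ᵥ v := by
  rw [euclNorm, Real.sq_sqrt (Finset.sum_nonneg fun i _ => sq_nonneg (v i))]
  simp only [dotProduct, sq]

lemma euclNorm_smul (c : ℝ) (v : Fin n → ℝ) : euclNorm (c • v) = |c| * euclNorm v := by
  have hsum : ∑ i, (c • v) i ^ 2 = c ^ 2 * ∑ i, v i ^ 2 := by
    rw [Finset.mul_sum]
    exact Finset.sum_congr rfl fun i _ => by rw [Pi.smul_apply, smul_eq_mul, mul_pow]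
  rw [euclNorm, euclNorm, hsum, Real.sqrt_mul (sq_nonneg c), Real.sqrt_sq_eq_abs]

lemma norm_le_euclNorm (v : Fin n → ℝ) : ‖v‖ ≤ euclNorm v := by
  refine (pi_norm_le_iff_of_nonneg (Real.sqrt_nonneg _)).mpr fun i => ?_
  rw [Real.norm_eq_abs, ← Real.sqrt_sq_eq_abs]
  exact Real.sqrt_le_sqrt
    (Finset.single_le_sum (f := fun j => v j ^ 2) (fun j _ => sq_nonneg (v j)) (Finset.mem_univ i))

lemma rayleigh_smul (A : Matrix (Fin n) (Fin n) ℝ) (v : Fin n → ℝ) {c : ℝ} (hc : c ≠ 0) :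
    (c • v) ⬝ᵥ (A *ᵥ (c • v)) / euclNorm (c • v) ^ 2 = v ⬝ᵥ (A *ᵥ v) / euclNorm v ^ 2 := by
  rw [euclNorm_smul, mul_pow, sq_abs, mulVec_smul, dotProduct_smul, smul_dotProduct,
    smul_eq_mul, smul_eq_mul, ← mul_assoc, ← sq, mul_div_mul_left _ _ (pow_ne_zero 2 hc)]

end Euclidean

lemma min_one_mul_inv_sq_mul_min_one_le_one {x : ℝ} (hx : 0 < x) :
    min x 1 * (x ^ 2)⁻¹ * min x 1 ≤ 1 := by
  have hmin : min x 1 * min x 1 ≤ x ^ 2 := by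
    nlinarith [min_le_left x 1, lt_min hx one_pos]
  rw [mul_right_comm, ← div_eq_mul_inv, div_le_one (by positivity)]
  exact hmin

section QuadraticForm

variable {ι : Type*} [Fintype ι]

lemma dotProduct_neg_sign_mul_smul_nonpos (g v : ι → ℝ) {t : ℝ} (ht : 0 ≤ t) :
    g ⬝ᵥ ((-(if 0 ≤ g ⬝ᵥ v then (1 : ℝ) else -1) * t) • v) ≤ 0 := by
  rw [dotProduct_smul, smul_eq_mul]
  split_ifs with hgv <;> nlinarith

lemma norm_min_one_div_mul_le {x : ι → ℝ} (hx : ∀ i, 0 < x i) (v : ι → ℝ) :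
    ‖fun i => (min (x i) 1 / x i) * v i‖ ≤ ‖v‖ := by
  refine (pi_norm_le_iff_of_nonneg (norm_nonneg v)).mpr fun i => ?_
  have hc : |min (x i) 1 / x i| ≤ 1 := by
    rw [abs_of_pos (div_pos (lt_min (hx i) one_pos) (hx i)), div_le_one (hx i)]
    exact min_le_left _ _
  rw [norm_mul, Real.norm_eq_abs]
  exact (mul_le_mul hc (norm_le_pi_norm v i) (norm_nonneg _) zero_le_one).trans_eq (one_mul _)

lemma norm_min_one_div_mul_pos {x : ι → ℝ} (hx : ∀ i, 0 < x i) {v : ι → ℝ} (hv : v ≠ 0) :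
    0 < ‖fun i => (min (x i) 1 / x i) * v i‖ := by
  refine norm_pos_iff.mpr fun hu => hv (funext fun i => ?_)
  have := congrFun hu i
  exact (mul_eq_zero.mp this).resolve_left (div_pos (lt_min (hx i) one_pos) (hx i)).ne'

variable [DecidableEq ι]

lemma dotProduct_diagonal_mulVec_le_dotProduct_self {w : ι → ℝ} (hw : ∀ i, w i ≤ 1)
    (v : ι → ℝ) : v ⬝ᵥ (diagonal w *ᵥ v) ≤ v ⬝ᵥ v := by
  simp only [dotProduct, mulVec_diagonal]
  exact Finset.sum_le_sum fun i _ => by nlinarith [hw i, mul_self_nonneg (v i)]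

lemma dotProduct_scaledBarrierHessian_mulVec_le {x : ι → ℝ} (hx : ∀ i, 0 < x i) {μ : ℝ}
    (hμ : 0 ≤ μ) (A : Matrix ι ι ℝ) (v : ι → ℝ) :
    v ⬝ᵥ ((diagonal (fun i => min (x i) 1) * (A + μ • diagonal (fun i => ((x i) ^ 2)⁻¹))
        * diagonal (fun i => min (x i) 1)) *ᵥ v)
      ≤ v ⬝ᵥ ((diagonal (fun i => min (x i) 1) * A * diagonal (fun i => min (x i) 1)) *ᵥ v)
        + μ * (v ⬝ᵥ v) := by
  rw [mul_add, add_mul, add_mulVec, dotProduct_add, Matrix.mul_smul, Matrix.smul_mul, smul_mulVec,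
    dotProduct_smul, diagonal_mul_diagonal, diagonal_mul_diagonal, smul_eq_mul]
  gcongr
  exact dotProduct_diagonal_mulVec_le_dotProduct_self
    (fun i => min_one_mul_inv_sq_mul_min_one_le_one (hx i)) v

end QuadraticForm

theorem stmt16_general {n : ℕ} (Hf : Matrix (Fin n) (Fin n) ℝ)
    (x : Fin n → ℝ) (hx : ∀ i, 0 < x i)
    (ε : ℝ) (hε : ε ∈ Set.Ioo (0:ℝ) 1)
    (μ : ℝ) (hμ : μ = ε^2 / 4)
    (β : ℝ) (hβ : β ∈ Set.Ico ε 1)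
    (g : Fin n → ℝ)
    (v : Fin n → ℝ) (hv : euclNorm v = 1)
    (hcurv : v ⬝ᵥ ((Matrix.diagonal (fun i => min (x i) 1) * Hf
        * Matrix.diagonal (fun i => min (x i) 1)) *ᵥ v) ≤ -ε/2)
    (H : Matrix (Fin n) (Fin n) ℝ)
    (hH : H = Matrix.diagonal (fun i => min (x i) 1)
        * (Hf + μ • Matrix.diagonal (fun i => ((x i)^2)⁻¹))
        * Matrix.diagonal (fun i => min (x i) 1))
    (σ : ℝ) (hσ : σ = if 0 ≤ g ⬝ᵥ v then (1:ℝ) else -1)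
    (d : Fin n → ℝ)
    (hd : d = (-σ * min (|v ⬝ᵥ (H *ᵥ v)|)
      (β / ‖(fun i => (min (x i) 1 / x i) * v i : Fin n → ℝ)‖)) • v) :
    v ⬝ᵥ (H *ᵥ v) ≤ -ε/4 ∧
      g ⬝ᵥ d ≤ 0 ∧
      ε/4 ≤ euclNorm d ∧
      d ⬝ᵥ (H *ᵥ d) / euclNorm d ^ 2 ≤ -euclNorm d ∧
      -euclNorm d ≤ -ε/4 := by
  obtain ⟨hε0, hε1⟩ := hε
  have hvv : v ⬝ᵥ v = 1 := by rw [← euclNorm_sq, hv, one_pow]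
  have hq : v ⬝ᵥ (H *ᵥ v) ≤ -ε/4 := by
    have := hH ▸ dotProduct_scaledBarrierHessian_mulVec_le hx (by rw [hμ]; positivity) Hf v
    nlinarith
  set u : Fin n → ℝ := fun i => (min (x i) 1 / x i) * v i
  have hu : ‖u‖ ≤ 1 := (norm_min_one_div_mul_le hx v).trans (hv ▸ norm_le_euclNorm v)
  have hu0 : 0 < ‖u‖ := norm_min_one_div_mul_pos hx fun h => by simp [h] at hvv
  set t := min |v ⬝ᵥ (H *ᵥ v)| (β / ‖u‖)
  have ht : ε/4 ≤ t := le_min (by rw [abs_of_neg (by linarith)]; linarith)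
    (by rw [le_div_iff₀ hu0]; nlinarith [hβ.1])
  have hσ1 : |σ| = 1 := by rw [hσ]; split_ifs <;> norm_num
  have hnd : euclNorm d = t := by
    rw [hd, euclNorm_smul, hv, abs_mul, abs_neg, hσ1, abs_of_pos (by linarith)]; ring
  refine ⟨hq, hd ▸ hσ ▸ dotProduct_neg_sign_mul_smul_nonpos g v (by linarith), hnd ▸ ht,
    ?_, by linarith⟩
  have hc : -σ * t ≠ 0 := by
    have : σ ≠ 0 := fun h => by simp [h] at hσ1
    exact mul_ne_zero (neg_ne_zero.mpr this) (by linarith)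
  rw [hd, rayleigh_smul H v hc, hv, one_pow, div_one, ← hd, hnd]
  have : t ≤ |v ⬝ᵥ (H *ᵥ v)| := min_le_left _ _
  rw [abs_of_neg (by linarith)] at this
  linarith

/-- let `Hf` be symmetric, `x > 0`, `ε ∈ (0,1)`, `μ = ε²/4`, `β ∈ [ε,1)`,
`g ∈ ℝⁿ`, and `v` with `‖v‖ = 1` and `vᵀX̄HfX̄v ≤ −ε/2`. Set `H = X̄(Hf + μX⁻²)X̄`.
Then `vᵀHv ≤ −ε/4`; moreover, for `d = −σ min{|vᵀHv|, β/‖X⁻¹X̄v‖∞} v` with `σ = 1`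
if `gᵀv ≥ 0` and `σ = −1` otherwise, we have `gᵀd ≤ 0`, `‖d‖ ≥ ε/4`, and
`dᵀHd/‖d‖² ≤ −‖d‖ ≤ −ε/4`. `euclNorm` denotes the Euclidean norm and `‖·‖` on
`Fin n → ℝ` is the max-norm. -/
theorem stmt16 {n : ℕ} (Hf : Matrix (Fin n) (Fin n) ℝ) (hHf : Hf.IsSymm)
    (x : Fin n → ℝ) (hx : ∀ i, 0 < x i)
    (ε : ℝ) (hε : ε ∈ Set.Ioo (0:ℝ) 1)
    (μ : ℝ) (hμ : μ = ε^2 / 4)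
    (β : ℝ) (hβ : β ∈ Set.Ico ε 1)
    (g : Fin n → ℝ)
    (v : Fin n → ℝ) (hv : euclNorm v = 1)
    (hcurv : v ⬝ᵥ ((Matrix.diagonal (fun i => min (x i) 1) * Hf
        * Matrix.diagonal (fun i => min (x i) 1)) *ᵥ v) ≤ -ε/2)
    (H : Matrix (Fin n) (Fin n) ℝ)
    (hH : H = Matrix.diagonal (fun i => min (x i) 1)
        * (Hf + μ • Matrix.diagonal (fun i => ((x i)^2)⁻¹))
        * Matrix.diagonal (fun i => min (x i) 1))
    (σ : ℝ) (hσ : σ = if 0 ≤ g ⬝ᵥ v then (1:ℝ) else -1)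
    (d : Fin n → ℝ)
    (hd : d = (-σ * min (|v ⬝ᵥ (H *ᵥ v)|)
      (β / ‖(fun i => (min (x i) 1 / x i) * v i : Fin n → ℝ)‖)) • v) :
    v ⬝ᵥ (H *ᵥ v) ≤ -ε/4 ∧
      g ⬝ᵥ d ≤ 0 ∧
      ε/4 ≤ euclNorm d ∧
      d ⬝ᵥ (H *ᵥ d) / euclNorm d ^ 2 ≤ -euclNorm d ∧
      -euclNorm d ≤ -ε/4 :=
  stmt16_general Hf x hx ε hε μ hμ β hβ g v hv hcurv H hH σ hσ d hd
end
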